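/- Let G be a group and let Γ be a group acting on G (on the right) by group automorphisms, writing g^γ for the action. Let S be a subset of G and Σ a subset of Γ. If G is generated by S and Γ is generated by Σ, then the normal closure in G of the set {s⁻¹ · s^σ : s ∈ S, σ ∈ Σ} equals the subgroup of G generated by {g⁻¹ · g^σ : g ∈ G, σ ∈ Σ}, and both equal the subgroup of G generated by {g⁻¹ · g^γ : g ∈ G, γ ∈ Γ}. -/

import Mathlib

/-!
Let `N` be the normal closure of `{s⁻¹ * s^σ : s ∈ S, σ ∈ Σ}`. For a fixed automorphism `f`,
the condition `g⁻¹ * f g ∈ N` says that `g` and `f g` have the same image in `G ⧸ N`, so the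
`g` satisfying it form a subgroup, and it holds on all of `G = ⟨S⟩` once it holds on `S`.
Likewise the automorphisms acting trivially on `G ⧸ N` in this sense form a subgroup of
`MulAut G`, so the condition passes from `Σ` to `Γ = ⟨Σ⟩`. Conversely, conjugating
`g⁻¹ * g^σ` by `k` gives `(g k)⁻¹ * (g k)^σ * (k⁻¹ * k^σ)⁻¹`, so the subgroup generated by
the `g⁻¹ * g^σ` is normal and therefore contains `N`.
-/

namespace Subgroup

variable {G : Type*} [Group G]

theorem closure_normal_of_forall_conj_mem {X : Set G}
    (h : ∀ x ∈ X, ∀ k : G, k⁻¹ * x * k ∈ closure X) : (closure X).Normal := by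
  have hconj : Group.conjugatesOfSet X ⊆ closure X := by
    intro y hy
    obtain ⟨x, hx, hconj⟩ := Group.mem_conjugatesOfSet_iff.1 hy
    obtain ⟨k, rfl⟩ := isConj_iff.1 hconj
    simpa using h x hx k⁻¹
  rw [le_antisymm closure_le_normalClosure (closure_le _ |>.2 hconj)]
  infer_instance

variable {F : Type*} [FunLike F G G] [MonoidHomClass F G G]

theorem conj_inv_mul_map (f : F) (g k : G) :
    k⁻¹ * (g⁻¹ * f g) * k = (g * k)⁻¹ * f (g * k) * (k⁻¹ * f k)⁻¹ := by
  rw [map_mul]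
  group

theorem closure_inv_mul_map_normal {ι : Type*} (φ : ι → F) (T : Set ι) :
    (closure {x : G | ∃ g : G, ∃ σ ∈ T, x = g⁻¹ * φ σ g}).Normal := by
  refine closure_normal_of_forall_conj_mem ?_
  rintro _ ⟨g, σ, hσ, rfl⟩ k
  rw [conj_inv_mul_map]
  exact mul_mem (subset_closure ⟨g * k, σ, hσ, rfl⟩) (inv_mem (subset_closure ⟨k, σ, hσ, rfl⟩))

theorem inv_mul_map_mem_of_closure_eq_top {N : Subgroup G} [N.Normal] {S : Set G}
    (hS : closure S = ⊤) (f : F) (h : ∀ s ∈ S, s⁻¹ * f s ∈ N) (g : G) : g⁻¹ * f g ∈ N := by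
  have hquot : QuotientGroup.mk' N = (QuotientGroup.mk' N).comp (f : G →* G) :=
    MonoidHom.eq_of_eqOn_dense hS fun s hs => QuotientGroup.eq.2 (h s hs)
  exact QuotientGroup.eq.1 (DFunLike.congr_fun hquot g)

end Subgroup

namespace MulAut

variable {G : Type*} [Group G]

def trivialModulo (N : Subgroup G) : Subgroup (MulAut G) where
  carrier := {f | ∀ g, g⁻¹ * f g ∈ N}
  one_mem' g := by simp
  mul_mem' {f₁ f₂} h₁ h₂ g := by
    have hsplit : g⁻¹ * (f₁ * f₂) g = (g⁻¹ * f₂ g) * ((f₂ g)⁻¹ * f₁ (f₂ g)) := by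
      rw [mul_apply]
      group
    rw [hsplit]
    exact N.mul_mem (h₂ g) (h₁ (f₂ g))
  inv_mem' {f} h g := by
    have hinv : g⁻¹ * f⁻¹ g = ((f⁻¹ g)⁻¹ * f (f⁻¹ g))⁻¹ := by
      rw [apply_inv_self]
      group
    rw [hinv]
    exact N.inv_mem (h (f⁻¹ g))

theorem mem_trivialModulo {N : Subgroup G} {f : MulAut G} :
    f ∈ trivialModulo N ↔ ∀ g, g⁻¹ * f g ∈ N :=
  Iff.rfl

end MulAut

open Subgroup

/-- Let `G` be a group and let `Γ` be a group acting on `G` by group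
automorphisms (encoded as a group homomorphism `φ : Γ →* MulAut G`).  Let `S ⊆ G` and
`Σ ⊆ Γ` (here called `T`).  If `G` is generated by `S` and `Γ` is generated by `T`, then the
normal closure in `G` of `{s⁻¹ * s^σ : s ∈ S, σ ∈ Σ}` equals the subgroup of `G` generated by
`{g⁻¹ * g^σ : g ∈ G, σ ∈ Σ}`, and both equal the subgroup of `G` generated by
`{g⁻¹ * g^γ : g ∈ G, γ ∈ Γ}`. -/
theorem normalClosure_eq_closure_of_generators {G Γ : Type*} [Group G] [Group Γ]
    (φ : Γ →* MulAut G) (S : Set G) (T : Set Γ)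
    (hS : Subgroup.closure S = ⊤) (hT : Subgroup.closure T = ⊤) :
    Subgroup.normalClosure {x : G | ∃ s ∈ S, ∃ σ ∈ T, x = s⁻¹ * φ σ s}
        = Subgroup.closure {x : G | ∃ (g : G), ∃ σ ∈ T, x = g⁻¹ * φ σ g} ∧
    Subgroup.closure {x : G | ∃ (g : G), ∃ σ ∈ T, x = g⁻¹ * φ σ g}
        = Subgroup.closure {x : G | ∃ (g : G) (γ : Γ), x = g⁻¹ * φ γ g} := by
  set N := normalClosure {x : G | ∃ s ∈ S, ∃ σ ∈ T, x = s⁻¹ * φ σ s}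
  set DT := closure {x : G | ∃ (g : G), ∃ σ ∈ T, x = g⁻¹ * φ σ g}
  set DΓ := closure {x : G | ∃ (g : G) (γ : Γ), x = g⁻¹ * φ γ g}
  have hΓ : closure T ≤ (MulAut.trivialModulo N).comap φ := closure_le _ |>.2 fun σ hσ =>
    MulAut.mem_trivialModulo.2 <| inv_mul_map_mem_of_closure_eq_top hS (φ σ)
      fun s hs => subset_normalClosure ⟨s, hs, σ, hσ, rfl⟩
  have : DT.Normal := closure_inv_mul_map_normal φ T
  have hN_le : N ≤ DT := normalClosure_le_normal <| by
    rintro _ ⟨s, -, σ, hσ, rfl⟩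
    exact subset_closure ⟨s, σ, hσ, rfl⟩
  have hDT_le : DT ≤ DΓ := closure_mono <| by
    rintro _ ⟨g, σ, -, rfl⟩
    exact ⟨g, σ, rfl⟩
  have hDΓ_le : DΓ ≤ N := closure_le _ |>.2 <| by
    rintro _ ⟨g, γ, rfl⟩
    exact hΓ (hT ▸ mem_top γ) g
  exact ⟨le_antisymm hN_le (hDT_le.trans hDΓ_le), le_antisymm hDT_le (hDΓ_le.trans hN_le)⟩
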